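/- Let k ≥ 1 and let T be the tree with vertex set {a,b,c} ∪ {v_1,…,v_k} and edges {a,b}, {b,c}, and {a,v_i} for 1 ≤ i ≤ k. Then T has at least (k+1) + binom(k, ⌈(k−2)/2⌉) distinct locally minimal defensive alliances. -/

import Mathlib

/-!
A vertex `v ∈ A` is defended iff `deg v ≤ 2 deg_A(v) + 1`. The pendant vertices
`c, v_1, …, v_k` are therefore locally minimal alliances on their own. For `S ⊆ {1, …, k}`
with `k ≤ 2|S| + 2` and `2|S| < k`, the set `{a, b} ∪ {v_i | i ∈ S}` is a defensive alliance,
and removing any of its vertices breaks it: without `a` the vertex `b` has no defender, and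
without `b` or a leaf the vertex `a` keeps only `|S|` defenders against `k + 1 - |S|` attackers.
The size `|S| = ⌈(k - 2)/2⌉` meets both bounds, giving `binom(k, ⌈(k - 2)/2⌉)` more alliances.
-/
/-- `degIn G X v` is the number of neighbors of `v` lying in the set `X`
(denoted `deg_X(v)` in the paper). -/
noncomputable def degIn {V : Type*} (G : SimpleGraph V) (X : Set V) (v : V) : ℕ :=
  {u | u ∈ X ∧ G.Adj v u}.ncard

/-- `A` is a defensive alliance of `G`: every `v ∈ A` satisfies
`deg_A(v) + 1 ≥ deg_{V∖A}(v)`. -/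
def IsDefensiveAlliance {V : Type*} (G : SimpleGraph V) (A : Set V) : Prop :=
  ∀ v ∈ A, degIn G A v + 1 ≥ degIn G Aᶜ v

/-- A nonempty defensive alliance is globally minimal if no nonempty proper
subset is a defensive alliance. -/
def IsGloballyMinimalDA {V : Type*} (G : SimpleGraph V) (A : Set V) : Prop :=
  A.Nonempty ∧ IsDefensiveAlliance G A ∧
    ∀ B : Set V, B ⊂ A → B.Nonempty → ¬ IsDefensiveAlliance G B

/-- A nonempty defensive alliance is locally minimal if for every `v ∈ A`,
the set `A ∖ {v}` is not a nonempty defensive alliance. -/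
def IsLocallyMinimalDA {V : Type*} (G : SimpleGraph V) (A : Set V) : Prop :=
  A.Nonempty ∧ IsDefensiveAlliance G A ∧
    ∀ v ∈ A, ¬ ((A \ {v}).Nonempty ∧ IsDefensiveAlliance G (A \ {v}))

/-- The caterpillar tree with spine `a = Sum.inl 0`, `b = Sum.inl 1`,
`c = Sum.inl 2` and leaves `v_i = Sum.inr i`; edges `{a,b}`, `{b,c}` and
`{a, v_i}` for `1 ≤ i ≤ k`. -/
def caterpillarTree (k : ℕ) : SimpleGraph (Fin 3 ⊕ Fin k) :=
  SimpleGraph.fromRel (fun x y =>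
    (x = Sum.inl 0 ∧ y = Sum.inl 1) ∨
    (x = Sum.inl 1 ∧ y = Sum.inl 2) ∨
    (∃ i : Fin k, x = Sum.inl 0 ∧ y = Sum.inr i))

section DefensiveAlliance

variable {V : Type*} (G : SimpleGraph V)

lemma degIn_eq_ncard_inter (X : Set V) (v : V) :
    degIn G X v = (X ∩ G.neighborSet v).ncard := rfl

lemma degIn_add_degIn_compl [Finite V] (X : Set V) (v : V) :
    degIn G X v + degIn G Xᶜ v = (G.neighborSet v).ncard := by
  rw [degIn_eq_ncard_inter, degIn_eq_ncard_inter, Set.inter_comm, Set.inter_comm Xᶜ,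
    ← Set.sdiff_eq, Set.ncard_inter_add_ncard_sdiff_eq_ncard]

lemma isDefensiveAlliance_iff [Finite V] (A : Set V) :
    IsDefensiveAlliance G A ↔ ∀ v ∈ A, (G.neighborSet v).ncard ≤ 2 * degIn G A v + 1 := by
  refine forall₂_congr fun v _ => ?_
  have := degIn_add_degIn_compl G A v
  omega

lemma degIn_singleton_self (v : V) : degIn G {v} v = 0 := by
  simp [degIn_eq_ncard_inter]

lemma isLocallyMinimalDA_singleton_iff [Finite V] (v : V) :
    IsLocallyMinimalDA G {v} ↔ (G.neighborSet v).ncard ≤ 1 := by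
  simp [IsLocallyMinimalDA, isDefensiveAlliance_iff, degIn_singleton_self]

end DefensiveAlliance

namespace caterpillarTree

variable {k : ℕ}

lemma neighborSet_inl_zero :
    (caterpillarTree k).neighborSet (Sum.inl 0) = insert (Sum.inl 1) (Set.range Sum.inr) := by
  ext u; simp [caterpillarTree]; aesop

lemma neighborSet_inl_one :
    (caterpillarTree k).neighborSet (Sum.inl 1) = {Sum.inl 0, Sum.inl 2} := by
  ext u; simp [caterpillarTree]; aesop

lemma neighborSet_inl_two :
    (caterpillarTree k).neighborSet (Sum.inl 2) = {Sum.inl 1} := by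
  ext u; simp [caterpillarTree]; aesop

lemma neighborSet_inr (i : Fin k) :
    (caterpillarTree k).neighborSet (Sum.inr i) = {Sum.inl 0} := by
  ext u; simp [caterpillarTree]; aesop

lemma ncard_neighborSet_inl_zero : ((caterpillarTree k).neighborSet (Sum.inl 0)).ncard = k + 1 := by
  rw [neighborSet_inl_zero, Set.ncard_insert_of_notMem (by simp), ← Set.image_univ,
    Set.ncard_image_of_injective _ Sum.inr_injective, Set.ncard_univ, Nat.card_eq_fintype_card,
    Fintype.card_fin]

lemma ncard_neighborSet_inl_one : ((caterpillarTree k).neighborSet (Sum.inl 1)).ncard = 2 := by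
  rw [neighborSet_inl_one, Set.ncard_pair (by simp)]

lemma degIn_inl_zero (X : Set (Fin 3 ⊕ Fin k)) :
    degIn (caterpillarTree k) X (Sum.inl 0) =
      (X ∩ {Sum.inl 1}).ncard + (Sum.inr ⁻¹' X).ncard := by
  have hdisj : Disjoint (X ∩ {Sum.inl 1}) (X ∩ Set.range Sum.inr) := by
    refine Set.disjoint_left.2 ?_
    rintro _ ⟨-, rfl⟩ ⟨-, i, hi⟩
    exact Sum.inr_ne_inl hi
  rw [degIn_eq_ncard_inter, neighborSet_inl_zero, Set.insert_eq, Set.inter_union_distrib_left,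
    Set.ncard_union_eq hdisj, ← Set.image_preimage_eq_inter_range,
    Set.ncard_image_of_injective _ Sum.inr_injective]

def allianceWithLeaves (S : Finset (Fin k)) : Set (Fin 3 ⊕ Fin k) :=
  insert (Sum.inl 0) (insert (Sum.inl 1) (Sum.inr '' S))

lemma inr_preimage_allianceWithLeaves (S : Finset (Fin k)) :
    Sum.inr ⁻¹' allianceWithLeaves S = S := by
  ext; simp [allianceWithLeaves]

lemma allianceWithLeaves_injective : Function.Injective (allianceWithLeaves (k := k)) := by
  intro S T h
  have := congrArg (Sum.inr ⁻¹' ·) h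
  simp only [inr_preimage_allianceWithLeaves] at this
  exact_mod_cast this

lemma isDefensiveAlliance_allianceWithLeaves {S : Finset (Fin k)} (hlarge : k ≤ 2 * S.card + 2) :
    IsDefensiveAlliance (caterpillarTree k) (allianceWithLeaves S) := by
  rw [isDefensiveAlliance_iff]
  rintro v (rfl | rfl | ⟨i, -, rfl⟩)
  · have hb : allianceWithLeaves S ∩ {Sum.inl 1} = {Sum.inl 1} := by simp [allianceWithLeaves]
    rw [degIn_inl_zero, hb, inr_preimage_allianceWithLeaves, ncard_neighborSet_inl_zero,
      Set.ncard_singleton, Set.ncard_coe_finset]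
    omega
  · have ha : 0 < degIn (caterpillarTree k) (allianceWithLeaves S) (Sum.inl 1) :=
      (Set.ncard_pos).2 ⟨Sum.inl 0, by simp [allianceWithLeaves, caterpillarTree]⟩
    rw [ncard_neighborSet_inl_one]
    omega
  · rw [neighborSet_inr, Set.ncard_singleton]
    omega

lemma not_isDefensiveAlliance_allianceWithLeaves_diff {S : Finset (Fin k)}
    (hsmall : 2 * S.card < k) {v : Fin 3 ⊕ Fin k} (hv : v ∈ allianceWithLeaves S) :
    ¬ IsDefensiveAlliance (caterpillarTree k) (allianceWithLeaves S \ {v}) := by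
  rw [isDefensiveAlliance_iff]
  intro hDA
  rcases hv with rfl | rfl | ⟨j, hj, rfl⟩
  · have h := hDA (Sum.inl 1) (by simp [allianceWithLeaves])
    have hb : degIn (caterpillarTree k) (allianceWithLeaves S \ {Sum.inl 0}) (Sum.inl 1) = 0 := by
      rw [degIn_eq_ncard_inter, Set.ncard_eq_zero]
      ext u; simp [allianceWithLeaves, neighborSet_inl_one]
      rintro (rfl | ⟨i, -, rfl⟩) <;> simp
    rw [ncard_neighborSet_inl_one, hb] at h
    omega
  · have h := hDA (Sum.inl 0) (by simp [allianceWithLeaves])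
    have hb : allianceWithLeaves S \ {Sum.inl 1} ∩ {Sum.inl 1} = ∅ := by simp
    have hleaves : Sum.inr ⁻¹' (allianceWithLeaves S \ {Sum.inl 1}) = S := by
      ext; simp [allianceWithLeaves]
    rw [degIn_inl_zero, hb, hleaves, ncard_neighborSet_inl_zero, Set.ncard_empty,
      Set.ncard_coe_finset] at h
    omega
  · have h := hDA (Sum.inl 0) (by simp [allianceWithLeaves])
    have hb : allianceWithLeaves S \ {Sum.inr j} ∩ {Sum.inl 1} = {Sum.inl 1} := by
      simp [allianceWithLeaves]
    have hleaves : Sum.inr ⁻¹' (allianceWithLeaves S \ {Sum.inr j}) = ↑(S.erase j) := by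
      ext; simp [allianceWithLeaves]
    rw [degIn_inl_zero, hb, hleaves, ncard_neighborSet_inl_zero, Set.ncard_singleton,
      Set.ncard_coe_finset, Finset.card_erase_of_mem hj] at h
    have := Finset.card_pos.2 ⟨j, hj⟩
    omega

lemma isLocallyMinimalDA_allianceWithLeaves {S : Finset (Fin k)}
    (hlarge : k ≤ 2 * S.card + 2) (hsmall : 2 * S.card < k) :
    IsLocallyMinimalDA (caterpillarTree k) (allianceWithLeaves S) :=
  ⟨⟨_, Set.mem_insert _ _⟩, isDefensiveAlliance_allianceWithLeaves hlarge,
    fun _ hv h => not_isDefensiveAlliance_allianceWithLeaves_diff hsmall hv h.2⟩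

def pendantVertex : Option (Fin k) → Fin 3 ⊕ Fin k :=
  fun o => o.elim (Sum.inl 2) Sum.inr

lemma pendantVertex_injective : Function.Injective (pendantVertex (k := k)) := by
  rintro (_ | i) (_ | j) h <;> simp_all [pendantVertex]

lemma pendantVertex_ne_inl_zero (o : Option (Fin k)) : pendantVertex o ≠ Sum.inl 0 := by
  cases o <;> simp [pendantVertex]

lemma isLocallyMinimalDA_singleton_pendantVertex (o : Option (Fin k)) :
    IsLocallyMinimalDA (caterpillarTree k) {pendantVertex o} := by
  rw [isLocallyMinimalDA_singleton_iff]
  cases o <;> simp [pendantVertex, neighborSet_inl_two, neighborSet_inr]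

def alliance (m : ℕ) :
    Option (Fin k) ⊕ {S : Finset (Fin k) // S.card = m} → Set (Fin 3 ⊕ Fin k) :=
  Sum.elim (fun o => {pendantVertex o}) (fun S => allianceWithLeaves S.1)

lemma alliance_injective (m : ℕ) : Function.Injective (alliance (k := k) m) := by
  refine Function.Injective.sumElim (Set.singleton_injective.comp pendantVertex_injective)
    (allianceWithLeaves_injective.comp Subtype.val_injective) fun o S h => ?_
  have : Sum.inl 0 ∈ ({pendantVertex o} : Set (Fin 3 ⊕ Fin k)) := by
    rw [h]; exact Set.mem_insert _ _
  exact pendantVertex_ne_inl_zero o (Set.mem_singleton_iff.1 this).symm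

lemma isLocallyMinimalDA_alliance {m : ℕ} (hlarge : k ≤ 2 * m + 2) (hsmall : 2 * m < k)
    (x : Option (Fin k) ⊕ {S : Finset (Fin k) // S.card = m}) :
    IsLocallyMinimalDA (caterpillarTree k) (alliance m x) := by
  rcases x with o | ⟨S, rfl⟩
  · exact isLocallyMinimalDA_singleton_pendantVertex o
  · exact isLocallyMinimalDA_allianceWithLeaves hlarge hsmall

end caterpillarTree

/-- For `k ≥ 1`, the caterpillar tree has at least
`(k+1) + binom(k, ⌈(k-2)/2⌉)` distinct locally minimal defensive alliances. -/
theorem le_card_locallyMinimalDA_caterpillar (k : ℕ) (hk : 1 ≤ k) :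
    (k + 1) + Nat.choose k ((k - 2 + 1) / 2) ≤
      Nat.card {A : Set (Fin 3 ⊕ Fin k) //
        IsLocallyMinimalDA (caterpillarTree k) A} := by
  set m := (k - 2 + 1) / 2
  have hlarge : k ≤ 2 * m + 2 := by omega
  have hsmall : 2 * m < k := by omega
  calc (k + 1) + Nat.choose k m
      = Nat.card (Option (Fin k) ⊕ {S : Finset (Fin k) // S.card = m}) := by
        rw [Nat.card_sum, Nat.card_eq_fintype_card, Nat.card_eq_fintype_card,
          Fintype.card_option, Fintype.card_fin, Fintype.card_finset_len, Fintype.card_fin]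
    _ ≤ _ := Nat.card_le_card_of_injective
        (fun x => ⟨caterpillarTree.alliance m x,
          caterpillarTree.isLocallyMinimalDA_alliance hlarge hsmall x⟩)
        fun _ _ h => caterpillarTree.alliance_injective m (congrArg Subtype.val h)
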